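/- arXiv:2201.12156 — 4 statements merged into one kernel-verified Lean document; each statement's English description precedes it below -/
import Mathlib

section
/- For real numbers q, γ, D with D > 0, D + γ - 2Dq²/(1-q²) > 0, and q² < 1/3, and for any real k ≠ 0, every root ν of the cubic polynomial ν³ + a₂(k)ν² + a₁(k)ν + a₀(k) has strictly negative real part, where a₂(k) = 2(1-q²) + (2+D)k², a₁(k) = (2 + k² - 6q² + 2D(1+k²-q²) + 2γ(1-q²))k², and a₀(k) = (Dk² + 2(D+γ)(1-q²) - 4Dq²)k⁴. -/
lemma rh_cubic (a₂ a₁ a₀ : ℝ) (h2 : 0 < a₂) (h0 : 0 < a₀) (h21 : a₀ < a₂ * a₁)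
    (ν : ℂ) (hroot : ν ^ 3 + (a₂ : ℂ) * ν ^ 2 + (a₁ : ℂ) * ν + (a₀ : ℂ) = 0) :
    ν.re < 0 := by
  have h1 : 0 < a₁ := by nlinarith
  by_contra hx
  push_neg at hx
  have hre := congrArg Complex.re hroot
  have him := congrArg Complex.im hroot
  simp only [Complex.add_re, Complex.add_im, Complex.mul_re, Complex.mul_im,
    Complex.ofReal_re, Complex.ofReal_im, pow_succ, pow_zero, one_mul,
    Complex.one_re, Complex.one_im, Complex.zero_re, Complex.zero_im] at hre him
  ring_nf at hre him
  set x := ν.re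
  set y := ν.im
  rcases eq_or_ne y 0 with hy | hy
  · rw [hy] at hre
    ring_nf at hre
    nlinarith [mul_nonneg hx (sq_nonneg x)]
  · have h3 : y * (3 * x ^ 2 + 2 * a₂ * x + a₁ - y ^ 2) = 0 := by linear_combination him
    have hy2 : y ^ 2 = 3 * x ^ 2 + 2 * a₂ * x + a₁ := by
      rcases mul_eq_zero.1 h3 with h | h
      · exact absurd h hy
      · linarith
    nlinarith [hre, hy2, mul_nonneg hx (sq_nonneg x), mul_nonneg hx hx,
      mul_nonneg h2.le hx, mul_nonneg h1.le hx]

/-- Every root of the characteristic polynomial of the Fourier symbol of the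
linearized modified Ginzburg-Landau operator has negative real part, for
nonzero frequency `k`, under the spectral stability conditions. -/
theorem stmt_0 (q γ D : ℝ) (hD : D > 0)
    (hspec : D + γ - 2 * D * q ^ 2 / (1 - q ^ 2) > 0) (hq : q ^ 2 < 1 / 3)
    (k : ℝ) (hk : k ≠ 0) (ν : ℂ)
    (hroot : ν ^ 3 + ((2 * (1 - q ^ 2) + (2 + D) * k ^ 2 : ℝ) : ℂ) * ν ^ 2
      + (((2 + k ^ 2 - 6 * q ^ 2 + 2 * D * (1 + k ^ 2 - q ^ 2)
          + 2 * γ * (1 - q ^ 2)) * k ^ 2 : ℝ) : ℂ) * ν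
      + (((D * k ^ 2 + 2 * (D + γ) * (1 - q ^ 2) - 4 * D * q ^ 2) * k ^ 4 : ℝ) : ℂ) = 0) :
    ν.re < 0 := by
  have hs : (0:ℝ) < 1 - q ^ 2 := by nlinarith
  have hk2 : (0:ℝ) < k ^ 2 := by positivity
  have hP : 0 < (D + γ) * (1 - q ^ 2) - 2 * D * q ^ 2 := by
    rw [gt_iff_lt, sub_pos, div_lt_iff₀ hs] at hspec
    nlinarith
  refine rh_cubic _ _ _ ?_ ?_ ?_ ν hroot
  · nlinarith
  · have h4 : (0:ℝ) < k ^ 4 := by positivity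
    nlinarith [mul_pos hD hk2]
  · nlinarith [mul_pos hk2 hP, mul_pos hk2 hk2, mul_pos hD (mul_pos hk2 hk2),
      mul_pos (mul_pos hD hD) (mul_pos hk2 hk2), mul_pos hs hk2, mul_pos hs hP,
      mul_pos hD (mul_pos hs hk2), mul_pos (mul_pos hk2 hk2) hP,
      sq_nonneg q, mul_pos hD hk2, mul_nonneg (sq_nonneg q) hk2.le,
      mul_nonneg (mul_nonneg hD.le (sq_nonneg q)) hk2.le]
end

section
/- For 1 ≤ p ≤ 2 there exists a constant C such that for all t ≥ 2: ∫₀^{t/2} (t-s)^{-1} (1+s)^{-3/(2p)} ds + ∫_{t/2}^t (t-s)^{-1/2} (1+s)^{-1/2-3/(2p)} ds ≤ C (1+t)^{-1/2-1/(2p)}. -/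
/-!
On `[0, t/2]` the kernel `(t - s)⁻¹` is at most `2 / t`, and on `[t/2, t]` the weight
`(1 + s)^{-c}` is at most `2^c (1 + t)^{-c}`; each half then reduces to an explicit power
integral. On the first half, lowering the exponent `3/(2p)` to some `b ≠ 1` with
`1/2 + 1/(2p) ≤ b` still gives the decay `t^{-min(b, 1)}`, and avoids the logarithm of the
borderline case `b = 1`.
-/

open intervalIntegral MeasureTheory Set Real

lemma integral_one_add_rpow_neg {b T : ℝ} (hb : b ≠ 1) (hT : 0 ≤ T) :
    ∫ s in (0 : ℝ)..T, (1 + s) ^ (-b) = ((1 + T) ^ (1 - b) - 1) / (1 - b) := by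
  have hb' : -b ≠ -1 := fun h => hb (neg_injective h)
  rw [integral_comp_add_left (fun x : ℝ => x ^ (-b)), add_zero,
    integral_rpow (Or.inr ⟨hb', by
      rw [uIcc_of_le (by linarith)]; exact fun h => by linarith [h.1]⟩),
    one_rpow, neg_add_eq_sub]

lemma integral_one_add_rpow_neg_le {b e T : ℝ} (hb : b ≠ 1) (he : 0 ≤ e) (hbe : 1 - b ≤ e)
    (hT : 0 ≤ T) : ∫ s in (0 : ℝ)..T, (1 + s) ^ (-b) ≤ (1 + T) ^ e / |1 - b| := by
  have hnonneg : 0 ≤ ∫ s in (0 : ℝ)..T, (1 + s) ^ (-b) :=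
    integral_nonneg hT fun s hs => rpow_nonneg (by linarith [hs.1]) _
  have hpow_nonneg : 0 ≤ (1 + T) ^ (1 - b) := rpow_nonneg (by linarith) _
  have hupper : (1 + T) ^ (1 - b) ≤ (1 + T) ^ e := rpow_le_rpow_of_exponent_le (by linarith) hbe
  have hone : 1 ≤ (1 + T) ^ e := one_le_rpow (by linarith) he
  rw [← abs_of_nonneg hnonneg, integral_one_add_rpow_neg hb hT, abs_div]
  gcongr
  exact abs_le.mpr ⟨by linarith, by linarith⟩

lemma integral_inv_sub_mul_one_add_rpow_neg_le {a b e t : ℝ} (hba : b ≤ a) (hb : b ≠ 1)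
    (he : -1 ≤ e) (hbe : -b ≤ e) (ht : 2 ≤ t) :
    ∫ s in (0 : ℝ)..(t / 2), (t - s)⁻¹ * (1 + s) ^ (-a) ≤ 3 / |1 - b| * (1 + t) ^ e := by
  have ht0 : 0 < t := by linarith
  have hpointwise : ∀ s ∈ Icc 0 (t / 2), (t - s)⁻¹ * (1 + s) ^ (-a) ≤ 2 / t * (1 + s) ^ (-b) := by
    rintro s ⟨hs0, hst⟩
    have hkernel : (t - s)⁻¹ ≤ 2 / t := by
      rw [← inv_div]; exact inv_anti₀ (by positivity) (by linarith)
    have hweight : (1 + s) ^ (-a) ≤ (1 + s) ^ (-b) :=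
      rpow_le_rpow_of_exponent_le (by linarith) (by linarith)
    gcongr
  calc ∫ s in (0 : ℝ)..(t / 2), (t - s)⁻¹ * (1 + s) ^ (-a)
      ≤ ∫ s in (0 : ℝ)..(t / 2), 2 / t * (1 + s) ^ (-b) := by
        refine integral_mono_on (by linarith) ?_ ?_ hpointwise
        all_goals
          refine ContinuousOn.intervalIntegrable ?_
          rw [uIcc_of_le (by linarith)]
          rintro s ⟨hs0, hst⟩
          fun_prop (disch := first | linarith | (left; linarith))
    _ = 2 / t * ∫ s in (0 : ℝ)..(t / 2), (1 + s) ^ (-b) := integral_const_mul _ _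
    _ ≤ 2 / t * ((1 + t / 2) ^ (e + 1) / |1 - b|) := by
        gcongr
        exact integral_one_add_rpow_neg_le hb (by linarith) (by linarith) (by linarith)
    _ ≤ 3 / (1 + t) * ((1 + t) ^ (e + 1) / |1 - b|) := by
        have hkernel : 2 / t ≤ 3 / (1 + t) := by
          rw [div_le_div_iff₀ ht0 (by linarith)]; linarith
        have hpow : (1 + t / 2) ^ (e + 1) ≤ (1 + t) ^ (e + 1) :=
          rpow_le_rpow (by linarith) (by linarith) (by linarith)
        gcongr
    _ = 3 / |1 - b| * (1 + t) ^ e := by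
        rw [rpow_add_one (by linarith)]; field_simp

lemma integral_sub_rpow_neg_mul_one_add_rpow_neg_le {α c e t : ℝ} (hα : α < 1) (hc : 0 ≤ c)
    (hαce : 1 - α - c ≤ e) (ht : 0 ≤ t) :
    ∫ s in (t / 2)..t, (t - s) ^ (-α) * (1 + s) ^ (-c) ≤ 2 ^ c / (1 - α) * (1 + t) ^ e := by
  have hkernel_integrable : IntervalIntegrable (fun s => (t - s) ^ (-α)) volume (t / 2) t := by
    simpa [show t - t / 2 = t / 2 by ring] using
      ((intervalIntegrable_rpow' (by linarith) : IntervalIntegrable (fun x : ℝ => x ^ (-α))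
        volume 0 (t / 2)).comp_sub_left t).symm
  have hkernel_integral : ∫ s in (t / 2)..t, (t - s) ^ (-α) = (t / 2) ^ (1 - α) / (1 - α) := by
    rw [integral_comp_sub_left (fun x : ℝ => x ^ (-α)), sub_self,
      integral_rpow (Or.inl (by linarith)), zero_rpow (by linarith),
      show t - t / 2 = t / 2 by ring, sub_zero, neg_add_eq_sub]
  have hweight : (1 + t / 2) ^ (-c) ≤ 2 ^ c * (1 + t) ^ (-c) := by
    calc (1 + t / 2) ^ (-c) ≤ ((1 + t) / 2) ^ (-c) :=
          rpow_le_rpow_of_nonpos (by linarith) (by linarith) (by linarith)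
      _ = 2 ^ c * (1 + t) ^ (-c) := by
          rw [div_rpow (by linarith) (by norm_num), rpow_neg (by norm_num : (0 : ℝ) ≤ 2)]
          field_simp
  calc ∫ s in (t / 2)..t, (t - s) ^ (-α) * (1 + s) ^ (-c)
      ≤ ∫ s in (t / 2)..t, (t - s) ^ (-α) * (1 + t / 2) ^ (-c) := by
        refine integral_mono_on (by linarith) ?_ (hkernel_integrable.mul_const _) ?_
        · refine hkernel_integrable.mul_continuousOn ?_
          rw [uIcc_of_le (by linarith)]
          rintro s ⟨hs, -⟩
          fun_prop (disch := left; linarith)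
        · rintro s ⟨hs, hst⟩
          exact mul_le_mul_of_nonneg_left
            (rpow_le_rpow_of_nonpos (by linarith) (by linarith) (by linarith))
            (rpow_nonneg (by linarith) _)
    _ = (t / 2) ^ (1 - α) / (1 - α) * (1 + t / 2) ^ (-c) := by
        rw [intervalIntegral.integral_mul_const, hkernel_integral]
    _ ≤ (1 + t) ^ (1 - α) / (1 - α) * (2 ^ c * (1 + t) ^ (-c)) := by
        have hpow : (t / 2) ^ (1 - α) ≤ (1 + t) ^ (1 - α) :=
          rpow_le_rpow (by linarith) (by linarith) (by linarith)
        have hα' : 0 < 1 - α := by linarith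
        gcongr
    _ = 2 ^ c / (1 - α) * (1 + t) ^ (1 - α - c) := by
        rw [sub_eq_add_neg (1 - α), rpow_add (by linarith)]; ring
    _ ≤ 2 ^ c / (1 - α) * (1 + t) ^ e := by
        gcongr
        linarith

/-- Split-interval convolution estimate: for `1 ≤ p ≤ 2` and `t ≥ 2`,
`∫₀^{t/2} (t-s)⁻¹ (1+s)^{-3/(2p)} ds + ∫_{t/2}^t (t-s)^{-1/2} (1+s)^{-1/2-3/(2p)} ds
  ≤ C (1+t)^{-1/2-1/(2p)}`. -/
theorem stmt_9 (p : ℝ) (hp1 : 1 ≤ p) (hp2 : p ≤ 2) :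
    ∃ C > 0, ∀ t : ℝ, 2 ≤ t →
      (∫ s in (0 : ℝ)..(t / 2), (t - s)⁻¹ * (1 + s) ^ (-(3 / (2 * p))))
        + (∫ s in (t / 2)..t, (t - s) ^ (-(1 : ℝ) / 2) * (1 + s) ^ (-(1 / 2) - 3 / (2 * p)))
        ≤ C * (1 + t) ^ (-(1 / 2) - 1 / (2 * p)) := by
  have hinv_lower : 1 / 2 ≤ 1 / p := one_div_le_one_div_of_le (by linarith) hp2
  have hinv_upper : 1 / p ≤ 1 := by simpa using one_div_le_one_div_of_le one_pos hp1
  have hinv_two_mul : 1 / (2 * p) = (1 / p) / 2 := by ring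
  have hthree_div : 3 / (2 * p) = 3 * (1 / p) / 2 := by ring
  obtain ⟨b, hβb, hba, hb1⟩ : ∃ b, 1 / 2 + 1 / (2 * p) ≤ b ∧ b ≤ 3 / (2 * p) ∧ b ≠ 1 := by
    by_cases ha : 3 / (2 * p) = 1
    · exact ⟨1 / 2 + 1 / (2 * p), le_rfl, by linarith, by intro; linarith⟩
    · exact ⟨3 / (2 * p), by linarith, le_rfl, ha⟩
  refine ⟨3 / |1 - b| + 2 ^ (1 / 2 + 3 / (2 * p)) / (1 - 1 / 2), by positivity, fun t ht => ?_⟩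
  have hnear_origin := integral_inv_sub_mul_one_add_rpow_neg_le (e := -(1 / 2) - 1 / (2 * p))
    hba hb1 (by linarith) (by linarith) ht
  have hnear_diagonal := integral_sub_rpow_neg_mul_one_add_rpow_neg_le (α := 1 / 2) (t := t)
    (c := 1 / 2 + 3 / (2 * p)) (e := -(1 / 2) - 1 / (2 * p)) (by norm_num) (by positivity)
    (by linarith) (by linarith)
  rw [← neg_div, neg_add'] at hnear_diagonal
  linarith
end

section
/- Let C > 1, set ε₀ = 1/(4C² + 2C) and suppose 0 < ε < ε₀. Let η: [0,T) → [0,∞) be continuous, nondecreasing, with η(0) ≤ Cε, and suppose that for all t ∈ [0,T) with η(t) ≤ 1 it holds η(t) ≤ C(ε + η(t)(η(t)+ε)ln(2+t)). Then η(t) ≤ 2Cε for all t ∈ [0,T) with t ≤ e^{ε₀/ε} - 2. -/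
/-- Bootstrap lemma with logarithmic loss: with `ε₀ = 1/(4C² + 2C)` and
`0 < ε < ε₀`, a continuous nondecreasing template function `η` satisfying
`η(0) ≤ Cε` and the key inequality `η(t) ≤ C(ε + η(t)(η(t)+ε)ln(2+t))`
whenever `η(t) ≤ 1` obeys `η(t) ≤ 2Cε` for all `t ∈ [0,T)` with
`t ≤ e^{ε₀/ε} - 2`. -/
theorem stmt_11 (T C ε : ℝ) (hC : 1 < C) (hε : 0 < ε)
    (hε₀ : ε < 1 / (4 * C ^ 2 + 2 * C)) (η : ℝ → ℝ)
    (hcont : ContinuousOn η (Set.Ico 0 T))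
    (hmono : ∀ s ∈ Set.Ico (0 : ℝ) T, ∀ t ∈ Set.Ico (0 : ℝ) T, s ≤ t → η s ≤ η t)
    (hnonneg : ∀ t ∈ Set.Ico (0 : ℝ) T, 0 ≤ η t)
    (h0 : η 0 ≤ C * ε)
    (hkey : ∀ t ∈ Set.Ico (0 : ℝ) T, η t ≤ 1 →
      η t ≤ C * (ε + η t * (η t + ε) * Real.log (2 + t))) :
    ∀ t ∈ Set.Ico (0 : ℝ) T, t ≤ Real.exp ((1 / (4 * C ^ 2 + 2 * C)) / ε) - 2 →
      η t ≤ 2 * C * ε := by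
  intro t ht hte
  by_contra hgt
  push_neg at hgt
  have hC0 : (0:ℝ) < C := by linarith
  have hden : (0:ℝ) < 4 * C ^ 2 + 2 * C := by nlinarith
  -- multiplied-out form of hε₀ : ε * (4C²+2C) < 1
  have hεm : ε * (4 * C ^ 2 + 2 * C) < 1 := by
    rw [div_eq_inv_mul] at hε₀
    calc ε * (4 * C ^ 2 + 2 * C) < (4 * C ^ 2 + 2 * C)⁻¹ * 1 * (4 * C ^ 2 + 2 * C) := by
          exact mul_lt_mul_of_pos_right hε₀ hden
      _ = (4 * C ^ 2 + 2 * C)⁻¹ * (4 * C ^ 2 + 2 * C) := by ring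
      _ = 1 := inv_mul_cancel₀ (ne_of_gt hden)
  have ht0 : 0 ≤ t := ht.1
  have htT : t < T := ht.2
  have hsub : Set.Icc (0:ℝ) t ⊆ Set.Ico 0 T := fun x hx => ⟨hx.1, lt_of_le_of_lt hx.2 htT⟩
  have hcont' : ContinuousOn η (Set.Icc 0 t) := hcont.mono hsub
  -- find s ∈ [0,t] with 2Cε < η s ≤ 2Cε + ε/2
  obtain ⟨s, hs_mem, hs_lb, hs_ub⟩ :
      ∃ s ∈ Set.Icc (0:ℝ) t, 2 * C * ε < η s ∧ η s ≤ 2 * C * ε + ε / 2 := by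
    by_cases hcase : η t ≤ 2 * C * ε + ε / 2
    · exact ⟨t, Set.right_mem_Icc.mpr ht0, hgt, hcase⟩
    · push_neg at hcase
      have hval : (2 * C * ε + ε / 2) ∈ Set.Icc (η 0) (η t) :=
        ⟨by nlinarith, le_of_lt hcase⟩
      obtain ⟨s, hs, hηs⟩ := intermediate_value_Icc ht0 hcont' hval
      exact ⟨s, hs, by rw [hηs]; nlinarith, le_of_eq hηs⟩
  have hsT : s ∈ Set.Ico 0 T := hsub hs_mem
  -- η s ≤ 1
  have hle1 : η s ≤ 1 := by nlinarith
  have hkey' := hkey s hsT hle1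
  set L := Real.log (2 + s) with hL
  have hL0 : 0 < L := Real.log_pos (by linarith [hs_mem.1])
  -- L ≤ ε₀ / ε, i.e. L * ε * (4C²+2C) ≤ 1
  have hLle : L ≤ (1 / (4 * C ^ 2 + 2 * C)) / ε := by
    have h2s : 2 + s ≤ Real.exp ((1 / (4 * C ^ 2 + 2 * C)) / ε) := by
      have := hs_mem.2; linarith
    calc L ≤ Real.log (Real.exp ((1 / (4 * C ^ 2 + 2 * C)) / ε)) :=
          Real.log_le_log (by linarith [hs_mem.1]) h2s
      _ = (1 / (4 * C ^ 2 + 2 * C)) / ε := Real.log_exp _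
  have hLεm : L * ε * (4 * C ^ 2 + 2 * C) ≤ 1 := by
    have h1 : L * ε ≤ 1 / (4 * C ^ 2 + 2 * C) := by
      have := mul_le_mul_of_nonneg_right hLle (le_of_lt hε)
      rwa [div_mul_cancel₀ _ (ne_of_gt hε)] at this
    calc L * ε * (4 * C ^ 2 + 2 * C) ≤ (1 / (4 * C ^ 2 + 2 * C)) * (4 * C ^ 2 + 2 * C) :=
          mul_le_mul_of_nonneg_right h1 (le_of_lt hden)
      _ = 1 := by field_simp
  -- quadratic contradiction
  set x := η s with hx
  set K := C * L with hK
  have hK0 : 0 < K := mul_pos hC0 hL0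
  -- K*ε*(4C+2) ≤ 1
  have hKε : K * ε * (4 * C + 2) ≤ 1 := by
    have : K * ε * (4 * C + 2) = L * ε * (4 * C ^ 2 + 2 * C) := by ring
    linarith [hLεm]
  -- Q(2Cε) ≤ 0 and slope factor negative
  have h1 : 0 < x - 2 * C * ε := by linarith
  have h2 : 0 < 1 - K * (x + 2 * C * ε + ε) := by nlinarith [mul_pos hK0 hε]
  -- key inequality says Q(x) ≥ 0
  have hQx : 0 ≤ K * x ^ 2 + (K * ε - 1) * x + C * ε := by nlinarith [hkey']
  nlinarith [mul_pos h1 h2, mul_pos hC0 hε, mul_pos hK0 hε]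
end

section
/- Let Λ: ℝ → ℂ^{m×m} be C¹ with ‖e^{tΛ(k)}‖ ≤ C e^{-μ k² t} and ‖Λ'(k)‖ ≤ C|k| for all k in a compact set J and t ≥ 0. Then ‖∂_k(e^{tΛ(k)})‖ ≤ C' |k| t e^{-μ k² t} for all k ∈ J and t ≥ 0, using the representation ∂_k(e^{tΛ(k)}) = t ∫₀¹ e^{ltΛ(k)} Λ'(k) e^{(1-l)tΛ(k)} dl. -/
/-- Bound on the `k`-derivative of a parametrized matrix exponential with
Gaussian-type decay, via the integral representation
`∂_k(e^{tΛ(k)}) = t ∫₀¹ e^{ltΛ(k)} Λ'(k) e^{(1-l)tΛ(k)} dl` (taken entrywise,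
and assumed as the hypothesis `hrep`). -/
theorem stmt_15 (m : ℕ) (J : Set ℝ) (hJ : IsCompact J)
    (Λ Λ' : ℝ → Matrix (Fin m) (Fin m) ℂ) (C μ : ℝ) (hC : 0 < C) (hμ : 0 < μ)
    (hdiff : ∀ k ∈ J, ∀ i j : Fin m, HasDerivAt (fun x => Λ x i j) (Λ' k i j) k)
    (hexp : ∀ k ∈ J, ∀ t : ℝ, 0 ≤ t → ∀ i j : Fin m,
      ‖NormedSpace.exp (t • Λ k) i j‖ ≤ C * Real.exp (-μ * k ^ 2 * t))
    (hΛ' : ∀ k ∈ J, ∀ i j : Fin m, ‖Λ' k i j‖ ≤ C * |k|)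
    (hrep : ∀ k ∈ J, ∀ t : ℝ, 0 ≤ t → ∀ i j : Fin m,
      HasDerivAt (fun x => NormedSpace.exp (t • Λ x) i j)
        ((t : ℂ) * ∫ l in (0 : ℝ)..1,
          (NormedSpace.exp ((l * t) • Λ k) * Λ' k
            * NormedSpace.exp (((1 - l) * t) • Λ k)) i j) k) :
    ∃ C' > 0, ∀ k ∈ J, ∀ t : ℝ, 0 ≤ t → ∀ i j : Fin m,
      ‖(t : ℂ) * ∫ l in (0 : ℝ)..1,
          (NormedSpace.exp ((l * t) • Λ k) * Λ' k
            * NormedSpace.exp (((1 - l) * t) • Λ k)) i j‖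
        ≤ C' * |k| * t * Real.exp (-μ * k ^ 2 * t) := by
  refine ⟨(m : ℝ) ^ 2 * C ^ 3 + 1, by positivity, ?_⟩
  intro k hk t ht i j
  set B : ℝ := (m : ℝ) ^ 2 * C ^ 3 * |k| * Real.exp (-μ * k ^ 2 * t) with hB
  have hBnn : 0 ≤ B := by positivity
  have key : ∀ l ∈ Set.uIoc (0 : ℝ) 1,
      ‖(NormedSpace.exp ((l * t) • Λ k) * Λ' k
          * NormedSpace.exp (((1 - l) * t) • Λ k)) i j‖ ≤ B := by
    intro l hl
    rw [Set.uIoc_of_le (by norm_num : (0:ℝ) ≤ 1)] at hl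
    have hl0 : 0 ≤ l := le_of_lt hl.1
    have hl1 : l ≤ 1 := hl.2
    have h1 : 0 ≤ l * t := mul_nonneg hl0 ht
    have h2 : 0 ≤ (1 - l) * t := mul_nonneg (by linarith) ht
    have hA := hexp k hk (l * t) h1
    have hCm := hexp k hk ((1 - l) * t) h2
    have hBm := hΛ' k hk
    have hterm : ∀ q p : Fin m,
        ‖NormedSpace.exp ((l * t) • Λ k) i p * Λ' k p q
          * NormedSpace.exp (((1 - l) * t) • Λ k) q j‖
        ≤ C * Real.exp (-μ * k ^ 2 * (l * t)) * (C * |k|)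
          * (C * Real.exp (-μ * k ^ 2 * ((1 - l) * t))) := by
      intro q p
      rw [norm_mul, norm_mul]
      exact mul_le_mul (mul_le_mul (hA i p) (hBm p q) (norm_nonneg _) (by positivity))
        (hCm q j) (norm_nonneg _) (by positivity)
    calc ‖(NormedSpace.exp ((l * t) • Λ k) * Λ' k
          * NormedSpace.exp (((1 - l) * t) • Λ k)) i j‖
        = ‖∑ q : Fin m, ∑ p : Fin m, NormedSpace.exp ((l * t) • Λ k) i p * Λ' k p q
            * NormedSpace.exp (((1 - l) * t) • Λ k) q j‖ := by
          simp [Matrix.mul_apply, Finset.sum_mul]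
      _ ≤ ∑ q : Fin m, ∑ p : Fin m, ‖NormedSpace.exp ((l * t) • Λ k) i p * Λ' k p q
            * NormedSpace.exp (((1 - l) * t) • Λ k) q j‖ := by
          refine (norm_sum_le _ _).trans (Finset.sum_le_sum fun q _ => norm_sum_le _ _)
      _ ≤ ∑ _q : Fin m, ∑ _p : Fin m, C * Real.exp (-μ * k ^ 2 * (l * t)) * (C * |k|)
            * (C * Real.exp (-μ * k ^ 2 * ((1 - l) * t))) := by
          exact Finset.sum_le_sum fun q _ => Finset.sum_le_sum fun p _ => hterm q p
      _ = (m : ℝ) ^ 2 * C ^ 3 * |k| *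
            (Real.exp (-μ * k ^ 2 * (l * t)) * Real.exp (-μ * k ^ 2 * ((1 - l) * t))) := by
          simp [Finset.sum_const]
          ring
      _ = B := by
          rw [← Real.exp_add, hB]
          ring_nf
  have hint : ‖∫ l in (0 : ℝ)..1,
      (NormedSpace.exp ((l * t) • Λ k) * Λ' k
        * NormedSpace.exp (((1 - l) * t) • Λ k)) i j‖ ≤ B * |1 - 0| :=
    intervalIntegral.norm_integral_le_of_norm_le_const key
  rw [norm_mul, Complex.norm_real]
  simp only [sub_zero, abs_one, mul_one] at hint
  calc |t| * ‖∫ l in (0 : ℝ)..1,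
      (NormedSpace.exp ((l * t) • Λ k) * Λ' k
        * NormedSpace.exp (((1 - l) * t) • Λ k)) i j‖
      ≤ t * B := by
        rw [abs_of_nonneg ht]
        exact mul_le_mul_of_nonneg_left hint ht
    _ ≤ ((m : ℝ) ^ 2 * C ^ 3 + 1) * |k| * t * Real.exp (-μ * k ^ 2 * t) := by
        rw [hB]
        have : 0 ≤ |k| * t * Real.exp (-μ * k ^ 2 * t) := by positivity
        nlinarith [this]
end
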